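/- arXiv:1010.0609 — 11 statements merged into one kernel-verified Lean document; each statement's English description precedes it below -/
import Mathlib

section
/- Let β, γ, δ > 0 and 0 < I* ≤ 1, and let S ∈ [0, 1 − I*]. There exist α, α′ ∈ [0,1] such that −βSI* − γSα + γ(1−S−I*)α′ = 0 and βSI* − δI* = 0 if and only if S = δ/β and I* ≤ (1−δ/β)/(1+δ/γ). Moreover, when I* ≤ (1−δ/β)/(1+δ/γ), one admissible choice is α = 0 and α′ = δI*/(γ(1−δ/β−I*)), which lies in [0,1]. -/
/-- Let β, γ, δ > 0 and 0 < I* ≤ 1, and S ∈ [0, 1 − I*]. There exist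
α, α′ ∈ [0,1] with −βSI* − γSα + γ(1−S−I*)α′ = 0 and βSI* − δI* = 0 iff S = δ/β and
I* ≤ (1−δ/β)/(1+δ/γ). Moreover, when I* ≤ (1−δ/β)/(1+δ/γ), one admissible choice is
α = 0 and α′ = δI*/(γ(1−δ/β−I*)), which lies in [0,1]. -/
theorem stationary_point_on_discontinuity_line (β γ δ Istar S : ℝ)
    (hβ : 0 < β) (hγ : 0 < γ) (hδ : 0 < δ) (hI0 : 0 < Istar) (hI1 : Istar ≤ 1)
    (hS : S ∈ Set.Icc (0 : ℝ) (1 - Istar)) :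
    ((∃ α α' : ℝ, α ∈ Set.Icc (0 : ℝ) 1 ∧ α' ∈ Set.Icc (0 : ℝ) 1 ∧
        -β * S * Istar - γ * S * α + γ * (1 - S - Istar) * α' = 0 ∧
        β * S * Istar - δ * Istar = 0) ↔
      (S = δ / β ∧ Istar ≤ (1 - δ / β) / (1 + δ / γ))) ∧
    (Istar ≤ (1 - δ / β) / (1 + δ / γ) →
      δ * Istar / (γ * (1 - δ / β - Istar)) ∈ Set.Icc (0 : ℝ) 1 ∧
      -β * (δ / β) * Istar - γ * (δ / β) * 0 +
        γ * (1 - δ / β - Istar) * (δ * Istar / (γ * (1 - δ / β - Istar))) = 0 ∧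
      β * (δ / β) * Istar - δ * Istar = 0) := by
  obtain ⟨hS0, hS1⟩ := hS
  have hγδ : 0 < 1 + δ / γ := by positivity
  have hβδ : β * (δ / β) = δ := by field_simp
  have key : Istar ≤ (1 - δ / β) / (1 + δ / γ) ↔
      δ * Istar ≤ γ * (1 - δ / β - Istar) := by
    rw [le_div_iff₀ hγδ]
    have hδγ : δ / γ * γ = δ := div_mul_cancel₀ δ (ne_of_gt hγ)
    have hβδ' : β * (δ / β) = δ := hβδ
    constructor <;> intro h <;>
      nlinarith [mul_le_mul_of_nonneg_left h hγ.le, mul_pos hδ hI0]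
  have second : Istar ≤ (1 - δ / β) / (1 + δ / γ) →
      δ * Istar / (γ * (1 - δ / β - Istar)) ∈ Set.Icc (0 : ℝ) 1 ∧
      -β * (δ / β) * Istar - γ * (δ / β) * 0 +
        γ * (1 - δ / β - Istar) * (δ * Istar / (γ * (1 - δ / β - Istar))) = 0 ∧
      β * (δ / β) * Istar - δ * Istar = 0 := by
    intro hc
    have hle : δ * Istar ≤ γ * (1 - δ / β - Istar) := key.mp hc
    have hden : 0 < γ * (1 - δ / β - Istar) := lt_of_lt_of_le (by positivity) hle
    refine ⟨⟨div_nonneg (by positivity) hden.le, (div_le_one hden).mpr hle⟩, ?_, ?_⟩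
    · rw [mul_div_cancel₀ _ (ne_of_gt hden)]
      field_simp; ring
    · rw [hβδ]; ring
  refine ⟨⟨?_, ?_⟩, second⟩
  · rintro ⟨α, α', ⟨hα0, hα1⟩, ⟨hα'0, hα'1⟩, h1, h2⟩
    have hSeq : S = δ / β := by
      field_simp; ring
      nlinarith
    refine ⟨hSeq, key.mpr ?_⟩
    have h1S : 0 ≤ 1 - S - Istar := by linarith
    have hle : δ * Istar ≤ γ * (1 - S - Istar) := by
      nlinarith [mul_nonneg (mul_nonneg hγ.le hS0) hα0,
        mul_nonneg (mul_nonneg hγ.le h1S) (by linarith : (0:ℝ) ≤ 1 - α')]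
    rw [hSeq] at hle; linarith
  · rintro ⟨hSeq, hc⟩
    obtain ⟨hmem, he1, he2⟩ := second hc
    exact ⟨0, δ * Istar / (γ * (1 - δ / β - Istar)), ⟨le_refl 0, zero_le_one⟩,
      hmem, by rw [hSeq]; exact he1, by rw [hSeq]; exact he2⟩
end

section
/- Let 0 < δ < β and γ > 0, and set a₁₁ = −(β+γ)/(1+δ/γ), a₁₂ = −(δ+γ), a₂₁ = (β−δ)/(1+δ/γ). Then every complex root z of the polynomial z² − a₁₁·z − a₁₂·a₂₁ has strictly negative real part. (This polynomial is the characteristic polynomial of the Jacobian of the SIRS-type system at the endemic equilibrium X₁ = (δ/β, (1−δ/β)/(1+δ/γ)), so X₁ is linearly stable whenever it exists.) -/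
lemma quad_roots_neg_re (b c : ℝ) (hb : 0 < b) (hc : 0 < c) :
    ∀ z : ℂ, z ^ 2 + (b : ℂ) * z + (c : ℂ) = 0 → z.re < 0 := by
  intro z hz
  have hre := congrArg Complex.re hz
  have him := congrArg Complex.im hz
  simp [pow_two, Complex.add_re, Complex.add_im, Complex.mul_re, Complex.mul_im] at hre him
  set x := z.re
  set y := z.im
  -- him : 2xy + by = 0 form
  rcases mul_self_nonneg y with _
  by_contra hx
  push_neg at hx
  -- x ≥ 0
  have hy : y * (2 * x + b) = 0 := by nlinarith [hre, him]
  rcases mul_eq_zero.1 hy with h0 | h0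
  · nlinarith
  · nlinarith

/-- Let 0 < δ < β and γ > 0, and set a₁₁ = −(β+γ)/(1+δ/γ),
a₁₂ = −(δ+γ), a₂₁ = (β−δ)/(1+δ/γ). Then every complex root z of
z² − a₁₁·z − a₁₂·a₂₁ has strictly negative real part. (Characteristic polynomial of
the Jacobian at the endemic equilibrium X₁, so X₁ is linearly stable whenever it
exists.) -/
theorem endemic_equilibrium_linearly_stable (β γ δ : ℝ) (hδ : 0 < δ) (hδβ : δ < β)
    (hγ : 0 < γ) :
    ∀ z : ℂ,
      z ^ 2 - ((-(β + γ) / (1 + δ / γ) : ℝ) : ℂ) * z -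
          ((-(δ + γ) : ℝ) : ℂ) * (((β - δ) / (1 + δ / γ) : ℝ) : ℂ) = 0 →
        z.re < 0 := by
  intro z hz
  have hden : 0 < 1 + δ / γ := by positivity
  apply quad_roots_neg_re ((β + γ) / (1 + δ / γ)) ((δ + γ) * ((β - δ) / (1 + δ / γ)))
  · have : 0 < β + γ := by linarith
    positivity
  · have h1 : 0 < β - δ := by linarith
    have h2 : 0 < δ + γ := by linarith
    positivity
  · rw [← hz]
    push_cast
    ring
end

section
/- Let β, γ, δ > 0 and let S, I : J → ℝ be differentiable on an open interval J with S(t) > 0 and I(t) > 0 for all t ∈ J, satisfying S′(t) = −βS(t)I(t) − γS(t) and I′(t) = βS(t)I(t) − δI(t). Then the function E(t) = S(t) − (δ/β)·log S(t) + I(t) + (γ/β)·log I(t) has derivative zero on J, i.e., E is constant along every trajectory of the above-the-line system. -/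
/-- Let β, γ, δ > 0 and let S, I be differentiable on an open interval J,
positive there, satisfying S′ = −βSI − γS and I′ = βSI − δI. Then
E(t) = S(t) − (δ/β)·log S(t) + I(t) + (γ/β)·log I(t) has derivative zero on J, i.e.,
E is constant along every trajectory of the above-the-line system. -/
theorem E_constant_above_line (β γ δ : ℝ) (hβ : 0 < β) (hγ : 0 < γ) (hδ : 0 < δ)
    (a b : ℝ) (S I : ℝ → ℝ)
    (hSpos : ∀ t ∈ Set.Ioo a b, 0 < S t) (hIpos : ∀ t ∈ Set.Ioo a b, 0 < I t)
    (hS : ∀ t ∈ Set.Ioo a b, HasDerivAt S (-β * S t * I t - γ * S t) t)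
    (hI : ∀ t ∈ Set.Ioo a b, HasDerivAt I (β * S t * I t - δ * I t) t) :
    ∀ t ∈ Set.Ioo a b,
      HasDerivAt
        (fun u => S u - δ / β * Real.log (S u) + I u + γ / β * Real.log (I u))
        0 t := by
  intro t ht
  have hS' := hS t ht
  have hI' := hI t ht
  have hSne := (hSpos t ht).ne'
  have hIne := (hIpos t ht).ne'
  have h := ((hS'.sub ((hS'.log hSne).const_mul (δ / β))).add hI').add
      ((hI'.log hIne).const_mul (γ / β))
  refine h.congr_deriv ?_
  field_simp
  ring
end

section
/- Let β, γ, δ > 0, and set S₁ = δ/β and I₁ = (1−δ/β)/(1+δ/γ). Let S, I : J → ℝ be differentiable on an open interval J with S(t) > 0 and I(t) > 0 for all t ∈ J, satisfying S′(t) = −βS(t)I(t) + γ(1−S(t)−I(t)) and I′(t) = βS(t)I(t) − δI(t). Then the function M(t) = S(t) − (S₁ + γ/β)·log(S(t) + γ/β) + I(t) − I₁·log I(t) satisfies M′(t) = −((βS(t) − δ)²/(βS(t) + γ))·((1 + γ/β)/(1 + δ/γ)) ≤ 0 for all t ∈ J; i.e., M is nonincreasing along trajectories of the below-the-line system. -/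
/-- Let β, γ, δ > 0, S₁ = δ/β, I₁ = (1−δ/β)/(1+δ/γ). Let S, I be
differentiable and positive on an open interval, satisfying the below-the-line (SIRS)
system S′ = −βSI + γ(1−S−I), I′ = βSI − δI. Then
M(t) = S(t) − (S₁+γ/β)·log(S(t)+γ/β) + I(t) − I₁·log I(t) satisfies
M′(t) = −((βS(t)−δ)²/(βS(t)+γ))·((1+γ/β)/(1+δ/γ)) ≤ 0; i.e., M is nonincreasing
along trajectories. -/
theorem M_decreasing_below_line (β γ δ : ℝ) (hβ : 0 < β) (hγ : 0 < γ) (hδ : 0 < δ)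
    (a b : ℝ) (S I : ℝ → ℝ)
    (hSpos : ∀ t ∈ Set.Ioo a b, 0 < S t) (hIpos : ∀ t ∈ Set.Ioo a b, 0 < I t)
    (hS : ∀ t ∈ Set.Ioo a b, HasDerivAt S (-β * S t * I t + γ * (1 - S t - I t)) t)
    (hI : ∀ t ∈ Set.Ioo a b, HasDerivAt I (β * S t * I t - δ * I t) t) :
    ∀ t ∈ Set.Ioo a b,
      HasDerivAt
        (fun u => S u - (δ / β + γ / β) * Real.log (S u + γ / β) + I u -
          (1 - δ / β) / (1 + δ / γ) * Real.log (I u))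
        (-((β * S t - δ) ^ 2 / (β * S t + γ)) * ((1 + γ / β) / (1 + δ / γ))) t ∧
      -((β * S t - δ) ^ 2 / (β * S t + γ)) * ((1 + γ / β) / (1 + δ / γ)) ≤ 0 := by
  intro t ht
  have hSt := hSpos t ht
  have hIt := hIpos t ht
  have hS' := hS t ht
  have hI' := hI t ht
  have hSne : S t + γ / β ≠ 0 := by positivity
  have hIne : I t ≠ 0 := ne_of_gt hIt
  have hSγ : (0:ℝ) < β * S t + γ := by positivity
  constructor
  · have h1 : HasDerivAt (fun u => S u + γ / β)
        (-β * S t * I t + γ * (1 - S t - I t)) t := hS'.add_const _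
    have hlogS : HasDerivAt (fun u => Real.log (S u + γ / β))
        ((-β * S t * I t + γ * (1 - S t - I t)) / (S t + γ / β)) t := h1.log hSne
    have hlogI : HasDerivAt (fun u => Real.log (I u))
        ((β * S t * I t - δ * I t) / I t) t := hI'.log hIne
    have hD : HasDerivAt
        (fun u => S u - (δ / β + γ / β) * Real.log (S u + γ / β) + I u -
          (1 - δ / β) / (1 + δ / γ) * Real.log (I u))
        ((-β * S t * I t + γ * (1 - S t - I t))
          - (δ / β + γ / β) * ((-β * S t * I t + γ * (1 - S t - I t)) / (S t + γ / β))
          + (β * S t * I t - δ * I t)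
          - (1 - δ / β) / (1 + δ / γ) * ((β * S t * I t - δ * I t) / I t)) t :=
      ((hS'.sub (hlogS.const_mul _)).add hI').sub (hlogI.const_mul _)
    convert hD using 1
    have h2 : (1:ℝ) + δ / γ ≠ 0 := by positivity
    field_simp
    ring
  · apply mul_nonpos_of_nonpos_of_nonneg
    · simp only [neg_nonpos]
      positivity
    · positivity
end

section
/- Let 0 < δ < β and γ > 0, and let S, I : [0,∞) → ℝ be differentiable functions satisfying S′(t) = −βS(t)I(t) + γ(1−S(t)−I(t)) and I′(t) = βS(t)I(t) − δI(t), with S(t) > 0 and I(t) > 0 for all t ≥ 0 and S(t) + I(t) ≤ 1. Then it is not the case that (S(t), I(t)) → (1, 0) as t → ∞: a trajectory starting with a strictly positive infection level cannot converge to the disease-free equilibrium X₀ = (1,0). -/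
open Filter

/-- Let 0 < δ < β and γ > 0, and let S, I : [0,∞) → ℝ be differentiable
solutions of the SIRS-type system with S(t) > 0, I(t) > 0 and S(t)+I(t) ≤ 1 for all
t ≥ 0. Then (S(t), I(t)) does not converge to the disease-free equilibrium
X₀ = (1,0) as t → ∞. -/
theorem positive_infection_not_to_X0 (β γ δ : ℝ) (hδ : 0 < δ) (hδβ : δ < β)
    (hγ : 0 < γ) (S I : ℝ → ℝ)
    (hS : ∀ t, 0 ≤ t → HasDerivAt S (-β * S t * I t + γ * (1 - S t - I t)) t)
    (hI : ∀ t, 0 ≤ t → HasDerivAt I (β * S t * I t - δ * I t) t)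
    (hSpos : ∀ t, 0 ≤ t → 0 < S t) (hIpos : ∀ t, 0 ≤ t → 0 < I t)
    (hSI : ∀ t, 0 ≤ t → S t + I t ≤ 1) :
    ¬ Tendsto (fun t => (S t, I t)) atTop (nhds ((1 : ℝ), (0 : ℝ))) := by
  intro h
  have hβ : 0 < β := hδ.trans hδβ
  have hS1 : Tendsto S atTop (nhds 1) := (continuous_fst.tendsto _).comp h
  have hI0 : Tendsto I atTop (nhds 0) := (continuous_snd.tendsto _).comp h
  -- eventually S t > δ/β
  have hq : δ / β < 1 := (div_lt_one hβ).mpr hδβ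
  have hev : ∀ᶠ t in atTop, δ / β < S t := hS1.eventually (eventually_gt_nhds hq)
  obtain ⟨T₀, hT₀⟩ := hev.exists_forall_of_atTop
  set T := max T₀ 0 with hT
  have hT0 : (0:ℝ) ≤ T := le_max_right _ _
  have hTge : ∀ t, T ≤ t → 0 ≤ t := fun t ht => hT0.trans ht
  have hderiv_nonneg : ∀ t, T ≤ t → 0 ≤ β * S t * I t - δ * I t := by
    intro t ht
    have hSt : δ / β < S t := hT₀ t ((le_max_left _ _).trans ht)
    have : δ ≤ β * S t := by
      have := (div_lt_iff₀ hβ).mp hSt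
      nlinarith
    nlinarith [hIpos t (hTge t ht)]
  -- I is monotone on Ici T
  have hmono : MonotoneOn I (Set.Ici T) := by
    apply monotoneOn_of_deriv_nonneg (convex_Ici T)
    · intro x hx
      exact ((hI x (hTge x hx)).continuousAt).continuousWithinAt
    · intro x hx
      rw [interior_Ici] at hx
      exact ((hI x (hTge x hx.le)).differentiableAt).differentiableWithinAt
    · intro x hx
      rw [interior_Ici] at hx
      rw [(hI x (hTge x hx.le)).deriv]
      exact hderiv_nonneg x hx.le
  have hIT : 0 < I T := hIpos T hT0
  have hev2 : ∀ᶠ t in atTop, I t < I T := hI0.eventually (eventually_lt_nhds hIT)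
  obtain ⟨t, hlt, hge⟩ := (hev2.and (eventually_ge_atTop T)).exists
  have := hmono (Set.self_mem_Ici) (Set.mem_Ici.mpr hge) hge
  linarith
end

section
/- Let β, γ, δ > 0 and 0 < I* < (1−δ/β)/(1+δ/γ) (which in particular forces δ < β). Define P⁻ = (γ+δ)I* − γ(1−δ/β), P⁺ = δ(I* + γ/β), and A^± = (2/3)·(−(βI* + γ))/P^±. Then P⁻ < 0, P⁺ > 0, A⁺ < 0 < A⁻, and hence A⁺ − A⁻ < 0. (These are exactly the hypotheses of Filippov's stability theorem that certify asymptotic stability of the stationary point X₂ = (δ/β, I*) on the discontinuity line.) -/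
/-- Let β, γ, δ > 0 and 0 < I* < (1−δ/β)/(1+δ/γ). Define
P⁻ = (γ+δ)I* − γ(1−δ/β), P⁺ = δ(I* + γ/β), and A^± = (2/3)·(−(βI*+γ))/P^±. Then
P⁻ < 0, P⁺ > 0, A⁺ < 0 < A⁻, hence A⁺ − A⁻ < 0. (These are the hypotheses of
Filippov's stability theorem certifying asymptotic stability of the stationary point
X₂ = (δ/β, I*) on the discontinuity line.) -/
theorem filippov_stability_conditions_X2 (β γ δ Istar : ℝ) (hβ : 0 < β) (hγ : 0 < γ)
    (hδ : 0 < δ) (hI0 : 0 < Istar) (hI : Istar < (1 - δ / β) / (1 + δ / γ)) :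
    (γ + δ) * Istar - γ * (1 - δ / β) < 0 ∧
    0 < δ * (Istar + γ / β) ∧
    (2 / 3) * (-(β * Istar + γ)) / (δ * (Istar + γ / β)) < 0 ∧
    0 < (2 / 3) * (-(β * Istar + γ)) / ((γ + δ) * Istar - γ * (1 - δ / β)) ∧
    (2 / 3) * (-(β * Istar + γ)) / (δ * (Istar + γ / β)) -
        (2 / 3) * (-(β * Istar + γ)) / ((γ + δ) * Istar - γ * (1 - δ / β)) < 0 := by
  have hden : 0 < 1 + δ / γ := by positivity
  have h1 : Istar * (1 + δ / γ) < 1 - δ / β := by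
    rw [← lt_div_iff₀ hden]; exact hI
  have hPm : (γ + δ) * Istar - γ * (1 - δ / β) < 0 := by
    have := mul_lt_mul_of_pos_left h1 hγ
    have hγδ : γ * (Istar * (1 + δ / γ)) = (γ + δ) * Istar := by
      field_simp
    nlinarith [this]
  have hPp : 0 < δ * (Istar + γ / β) := by positivity
  have hnum : (2 / 3 : ℝ) * (-(β * Istar + γ)) < 0 := by nlinarith
  have hAp : (2 / 3) * (-(β * Istar + γ)) / (δ * (Istar + γ / β)) < 0 :=
    div_neg_of_neg_of_pos hnum hPp
  have hAm : 0 < (2 / 3) * (-(β * Istar + γ)) / ((γ + δ) * Istar - γ * (1 - δ / β)) :=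
    div_pos_of_neg_of_neg hnum hPm
  exact ⟨hPm, hPp, hAp, hAm, by linarith⟩
end

section
/- Let β, γ, δ > 0 and let p_SP, p_PS : [0,1] → [0,1] be differentiable with p_SP′(I) > 0 and p_PS′(I) < 0 for all I ∈ [0,1], with p_SP(0) + p_PS(0) > 0, and suppose δ/β ≤ p_PS(0)/(p_SP(0) + p_PS(0)). Define g(I) = −δI − (γδ/β)·p_SP(I) + γ(1 − δ/β − I)·p_PS(I). Then there exists exactly one I ∈ [0,1] with g(I) = 0. (This unique root I₁ gives the endemic equilibrium X₁ = (δ/β, I₁) of the continuous-response model.) -/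
/-- Let β, γ, δ > 0 and p_SP, p_PS : [0,1] → [0,1] differentiable with
p_SP′ > 0, p_PS′ < 0 on [0,1], p_SP(0)+p_PS(0) > 0, and suppose
δ/β ≤ p_PS(0)/(p_SP(0)+p_PS(0)). Define
g(I) = −δI − (γδ/β)·p_SP(I) + γ(1 − δ/β − I)·p_PS(I). Then there is exactly one
I ∈ [0,1] with g(I) = 0. (This root I₁ gives the endemic equilibrium
X₁ = (δ/β, I₁) of the continuous-response model.) -/
theorem unique_endemic_equilibrium_continuous (β γ δ : ℝ) (hβ : 0 < β) (hγ : 0 < γ)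
    (hδ : 0 < δ) (pSP pPS : ℝ → ℝ)
    (hmem : ∀ I ∈ Set.Icc (0 : ℝ) 1, pSP I ∈ Set.Icc (0 : ℝ) 1 ∧
      pPS I ∈ Set.Icc (0 : ℝ) 1)
    (hSP : ∀ I ∈ Set.Icc (0 : ℝ) 1, DifferentiableAt ℝ pSP I ∧ 0 < deriv pSP I)
    (hPS : ∀ I ∈ Set.Icc (0 : ℝ) 1, DifferentiableAt ℝ pPS I ∧ deriv pPS I < 0)
    (hpos : 0 < pSP 0 + pPS 0)
    (hcond : δ / β ≤ pPS 0 / (pSP 0 + pPS 0)) :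
    ∃! I : ℝ, I ∈ Set.Icc (0 : ℝ) 1 ∧
      -δ * I - (γ * δ / β) * pSP I + γ * (1 - δ / β - I) * pPS I = 0 := by
  set g : ℝ → ℝ := fun I => -δ * I - (γ * δ / β) * pSP I + γ * (1 - δ / β - I) * pPS I
    with hgdef
  have hδβ : 0 < δ / β := div_pos hδ hβ
  have h0m : (0:ℝ) ∈ Set.Icc (0:ℝ) 1 := ⟨le_refl 0, zero_le_one⟩
  have hSP0 : 0 ≤ pSP 0 := ((hmem 0 h0m).1).1
  have hPS0 : 0 ≤ pPS 0 := ((hmem 0 h0m).2).1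
  have hδβ1 : δ / β ≤ 1 := by
    refine hcond.trans ?_
    rw [div_le_one hpos]; linarith
  set s : ℝ := 1 - δ / β with hsdef
  have hs0 : 0 ≤ s := by simp [hsdef]; linarith
  have hs1 : s < 1 := by simp [hsdef]; linarith
  have hsub : Set.Icc (0:ℝ) s ⊆ Set.Icc (0:ℝ) 1 := Set.Icc_subset_Icc le_rfl hs1.le
  -- derivative of g
  have hderiv : ∀ I ∈ Set.Icc (0:ℝ) 1, HasDerivAt g
      (-δ - (γ * δ / β) * deriv pSP I
        + γ * ((-1) * pPS I + (1 - δ / β - I) * deriv pPS I)) I := by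
    intro I hI
    have h1 : HasDerivAt (fun x : ℝ => -δ * x) (-δ) I := by
      simpa using (hasDerivAt_id I).const_mul (-δ)
    have h2 : HasDerivAt pSP (deriv pSP I) I := (hSP I hI).1.hasDerivAt
    have h3 : HasDerivAt pPS (deriv pPS I) I := (hPS I hI).1.hasDerivAt
    have h4 : HasDerivAt (fun x : ℝ => 1 - δ / β - x) (-1) I := by
      simpa using (hasDerivAt_id I).const_sub (1 - δ / β)
    have h5 : HasDerivAt (fun x : ℝ => (1 - δ / β - x) * pPS x)
        ((-1) * pPS I + (1 - δ / β - I) * deriv pPS I) I := h4.mul h3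
    have h6 := (h1.sub (h2.const_mul (γ * δ / β))).add (h5.const_mul γ)
    have : g = fun x : ℝ =>
        -δ * x - (γ * δ / β) * pSP x + γ * ((1 - δ / β - x) * pPS x) := by
      funext x; rw [hgdef]; ring
    rw [this]
    exact h6
  have hcont : ContinuousOn g (Set.Icc 0 s) := fun I hI =>
    (hderiv I (hsub hI)).continuousAt.continuousWithinAt
  -- g strictly decreasing on [0,s]
  have hanti : StrictAntiOn g (Set.Icc 0 s) := by
    refine strictAntiOn_of_deriv_neg (convex_Icc 0 s) hcont ?_
    intro x hx
    rw [interior_Icc] at hx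
    have hx1 : x ∈ Set.Icc (0:ℝ) 1 := hsub ⟨hx.1.le, hx.2.le⟩
    rw [(hderiv x hx1).deriv]
    have hpSP' : 0 < deriv pSP x := (hSP x hx1).2
    have hpPS' : deriv pPS x < 0 := (hPS x hx1).2
    have hpPSx : 0 ≤ pPS x := ((hmem x hx1).2).1
    have hsx : 0 < 1 - δ / β - x := by simp [hsdef] at hx; linarith [hx.2]
    have ht1 : 0 < (γ * δ / β) * deriv pSP x :=
      mul_pos (by positivity) hpSP'
    have ht2 : (1 - δ / β - x) * deriv pPS x < 0 := mul_neg_of_pos_of_neg hsx hpPS'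
    nlinarith
  -- all roots in [0,1] lie in [0,s]
  have hroot_in : ∀ y ∈ Set.Icc (0:ℝ) 1, g y = 0 → y ∈ Set.Icc 0 s := by
    intro y hy hgy
    refine ⟨hy.1, ?_⟩
    by_contra hys
    push_neg at hys
    have hy0 : 0 < y := lt_of_le_of_lt hs0 hys
    have hpSPy : 0 ≤ pSP y := ((hmem y hy).1).1
    have hpPSy : 0 ≤ pPS y := ((hmem y hy).2).1
    have hsy : 1 - δ / β - y < 0 := by simp [hsdef] at hys; linarith
    have h1 : (γ * δ / β) * pSP y ≥ 0 := by positivity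
    have h2 : γ * (1 - δ / β - y) * pPS y ≤ 0 := by
      have : γ * (1 - δ / β - y) < 0 := mul_neg_of_pos_of_neg hγ hsy
      exact mul_nonpos_of_nonpos_of_nonneg this.le hpPSy
    have : g y < 0 := by rw [hgdef]; simp only; nlinarith
    linarith
  -- g 0 ≥ 0
  have hg0 : 0 ≤ g 0 := by
    have hsum : δ / β * (pSP 0 + pPS 0) ≤ pPS 0 := by
      rw [div_le_div_iff₀ hβ hpos] at hcond
      rw [div_mul_eq_mul_div, div_le_iff₀ hβ]
      nlinarith
    rw [hgdef]; simp only
    have : -δ * 0 - γ * δ / β * pSP 0 + γ * (1 - δ / β - 0) * pPS 0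
        = γ * (pPS 0 - δ / β * (pSP 0 + pPS 0)) := by field_simp; ring
    rw [this]
    have : 0 ≤ pPS 0 - δ / β * (pSP 0 + pPS 0) := by linarith
    positivity
  -- g s ≤ 0
  have hgs : g s ≤ 0 := by
    have hpSPs : 0 ≤ pSP s := ((hmem s ⟨hs0, hs1.le⟩).1).1
    have hgsval : g s = -δ * s - γ * δ / β * pSP s := by
      rw [hgdef]; simp
    rw [hgsval]
    nlinarith [mul_nonneg (le_of_lt (by positivity : (0:ℝ) < γ * δ / β)) hpSPs,
      mul_nonneg hδ.le hs0]
  -- existence by IVT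
  have hmemIVT : (0:ℝ) ∈ Set.Icc (g s) (g 0) := ⟨hgs, hg0⟩
  obtain ⟨I, hIin, hgI⟩ := intermediate_value_Icc' hs0 hcont hmemIVT
  refine ⟨I, ⟨hsub hIin, hgI⟩, ?_⟩
  rintro y ⟨hy, hgy⟩
  have hgy' : g y = 0 := hgy
  exact hanti.injOn (hroot_in y hy hgy') hIin (by rw [hgy', hgI])
end

section
/- Let β, γ, δ > 0 and let p_SP, p_PS : ℝ → ℝ be differentiable functions with p_SP(I) ≥ 0 and p_PS(I) ≥ 0 for all I. Define F₁(S,I) = −βSI − γS·p_SP(I) + γ(1−S−I)·p_PS(I) and F₂(S,I) = βSI − δI. Then for all S and all I > 0, ∂/∂S (F₁(S,I)/I) + ∂/∂I (F₂(S,I)/I) = −β − γ·p_SP(I)/I − γ·p_PS(I)/I, and this quantity is strictly negative. (This verifies Dulac's criterion with multiplier h(S,I) = 1/I, excluding periodic trajectories of the continuous-response model away from I = 0.) -/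
/-- Let β, γ, δ > 0 and p_SP, p_PS : ℝ → ℝ differentiable with
nonnegative values. With F₁(S,I) = −βSI − γS·p_SP(I) + γ(1−S−I)·p_PS(I) and
F₂(S,I) = βSI − δI, for all S and all I > 0,
∂/∂S (F₁(S,I)/I) + ∂/∂I (F₂(S,I)/I) = −β − γ·p_SP(I)/I − γ·p_PS(I)/I < 0.
(Dulac's criterion with multiplier h(S,I) = 1/I.) -/
theorem dulac_criterion_continuous_model (β γ δ : ℝ) (hβ : 0 < β) (hγ : 0 < γ)
    (hδ : 0 < δ) (pSP pPS : ℝ → ℝ)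
    (hdSP : Differentiable ℝ pSP) (hdPS : Differentiable ℝ pPS)
    (hnn : ∀ I : ℝ, 0 ≤ pSP I ∧ 0 ≤ pPS I) :
    ∀ S I : ℝ, 0 < I →
      (deriv (fun s => (-β * s * I - γ * s * pSP I + γ * (1 - s - I) * pPS I) / I) S
          + deriv (fun i => (β * S * i - δ * i) / i) I
        = -β - γ * pSP I / I - γ * pPS I / I) ∧
      -β - γ * pSP I / I - γ * pPS I / I < 0 := by
  intro S I hI
  have hI0 : I ≠ 0 := ne_of_gt hI
  constructor
  · have h1 : deriv (fun s => (-β * s * I - γ * s * pSP I + γ * (1 - s - I) * pPS I) / I) S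
        = -β - γ * pSP I / I - γ * pPS I / I := by
      have heq : (fun s => (-β * s * I - γ * s * pSP I + γ * (1 - s - I) * pPS I) / I)
          = fun s => (-β - γ * pSP I / I - γ * pPS I / I) * s + γ * (1 - I) * pPS I / I := by
        funext s
        field_simp
        ring
      rw [heq]
      have : HasDerivAt (fun s : ℝ => (-β - γ * pSP I / I - γ * pPS I / I) * s
          + γ * (1 - I) * pPS I / I) (-β - γ * pSP I / I - γ * pPS I / I) S := by
        simpa using ((hasDerivAt_id S).const_mul
          (-β - γ * pSP I / I - γ * pPS I / I)).add_const (γ * (1 - I) * pPS I / I)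
      exact this.deriv
    have h2 : deriv (fun i => (β * S * i - δ * i) / i) I = 0 := by
      have heq : (fun i => (β * S * i - δ * i) / i) =ᶠ[nhds I] fun _ => β * S - δ := by
        filter_upwards [eventually_ne_nhds hI0] with i hi
        field_simp
      rw [heq.deriv_eq, deriv_const]
    rw [h1, h2, add_zero]
  · have h1 : 0 ≤ γ * pSP I / I := by
      have := (hnn I).1; positivity
    have h2 : 0 ≤ γ * pPS I / I := by
      have := (hnn I).2; positivity
    linarith [(hnn I).1]
end

section
/- Let β, γ, δ > 0 and let p_SP, p_PS : ℝ → [0,1] be continuously differentiable with p_SP′(I) > 0 and p_PS′(I) < 0. Then there is no nonconstant periodic differentiable solution (S, I) : ℝ → ℝ² of the system S′ = −βSI − γS·p_SP(I) + γ(1−S−I)·p_PS(I), I′ = βSI − δI with S(t) ≥ 0, I(t) > 0, and S(t) + I(t) ≤ 1 for all t. In other words, the continuous-response epidemic model has no periodic trajectory with positive infection level. -/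
/-- Let β, γ, δ > 0 and p_SP, p_PS : ℝ → [0,1] continuously
differentiable with p_SP′ > 0 and p_PS′ < 0. Then there is no nonconstant periodic
differentiable solution (S, I) of S′ = −βSI − γS·p_SP(I) + γ(1−S−I)·p_PS(I),
I′ = βSI − δI with S ≥ 0, I > 0, S + I ≤ 1: the continuous-response epidemic model
has no periodic trajectory with positive infection level. -/
theorem no_periodic_trajectory_continuous (β γ δ : ℝ) (hβ : 0 < β) (hγ : 0 < γ)
    (hδ : 0 < δ) (pSP pPS : ℝ → ℝ)
    (hmem : ∀ I : ℝ, pSP I ∈ Set.Icc (0 : ℝ) 1 ∧ pPS I ∈ Set.Icc (0 : ℝ) 1)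
    (hcSP : ContDiff ℝ 1 pSP) (hcPS : ContDiff ℝ 1 pPS)
    (hSP' : ∀ I : ℝ, 0 < deriv pSP I) (hPS' : ∀ I : ℝ, deriv pPS I < 0) :
    ¬ ∃ (T : ℝ) (S I : ℝ → ℝ),
        0 < T ∧
        Function.Periodic S T ∧ Function.Periodic I T ∧
        (∃ t₁ t₂ : ℝ, (S t₁, I t₁) ≠ (S t₂, I t₂)) ∧
        (∀ t, 0 ≤ S t ∧ 0 < I t ∧ S t + I t ≤ 1) ∧
        (∀ t, HasDerivAt S
            (-β * S t * I t - γ * S t * pSP (I t) +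
              γ * (1 - S t - I t) * pPS (I t)) t ∧
          HasDerivAt I (β * S t * I t - δ * I t) t) := by
  rintro ⟨T, S, I, hT, hSper, hIper, ⟨t₁, t₂, hne⟩, hpos, hode⟩
  have hIpos : ∀ t, 0 < I t := fun t => (hpos t).2.1
  -- auxiliary functions
  set u : ℝ → ℝ := fun t => β * S t - δ with hu
  set Φ : ℝ → ℝ := fun y => β * y + γ * pSP y + γ * pPS y with hΦdef
  set G : ℝ → ℝ := fun y => -δ * β * y - γ * δ * pSP y + γ * (β - δ - β * y) * pPS y
    with hGdef
  have hGcont : Continuous G := by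
    have h1 := hcSP.continuous
    have h2 := hcPS.continuous
    fun_prop
  set g : ℝ → ℝ := fun y => G y / y with hgdef
  set H : ℝ → ℝ := fun z => ∫ y in (1:ℝ)..z, g y with hHdef
  -- H has derivative G z / z at every z > 0
  have hHderiv : ∀ z : ℝ, 0 < z → HasDerivAt H (G z / z) z := by
    intro z hz
    have hcg : ∀ y ∈ Set.Ioi (0:ℝ), ContinuousAt g y := by
      intro y hy
      exact (hGcont.continuousAt).div continuousAt_id (ne_of_gt hy)
    have hint : IntervalIntegrable g MeasureTheory.volume 1 z := by
      apply ContinuousOn.intervalIntegrable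
      intro y hy
      have hy0 : 0 < y := by
        rcases Set.mem_uIcc.mp hy with ⟨h1, _⟩ | ⟨h1, _⟩
        · linarith
        · linarith
      exact (hcg y hy0).continuousWithinAt
    exact intervalIntegral.integral_hasDerivAt_right hint
      (ContinuousAt.stronglyMeasurableAtFilter isOpen_Ioi hcg z hz)
      (hcg z hz)
  -- F = u^2/2 - H (I t)
  set F : ℝ → ℝ := fun t => (u t) ^ 2 / 2 - H (I t) with hFdef
  have hFderiv : ∀ t, HasDerivAt F (-(u t) ^ 2 * Φ (I t)) t := by
    intro t
    obtain ⟨hS, hI⟩ := hode t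
    have hu' : HasDerivAt u
        (β * (-β * S t * I t - γ * S t * pSP (I t) +
          γ * (1 - S t - I t) * pPS (I t))) t := (hS.const_mul β).sub_const δ
    have hsq : HasDerivAt (fun s => (u s) ^ 2 / 2)
        ((2 * u t ^ 1 * (β * (-β * S t * I t - γ * S t * pSP (I t) +
          γ * (1 - S t - I t) * pPS (I t)))) / 2) t := (hu'.pow 2).div_const 2
    have hHI : HasDerivAt (fun s => H (I s))
        (G (I t) / I t * (β * S t * I t - δ * I t)) t :=
      (hHderiv (I t) (hIpos t)).comp t hI
    have := hsq.sub hHI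
    refine HasDerivAt.congr_deriv (f := F) this ?_
    have hI0 : I t ≠ 0 := ne_of_gt (hIpos t)
    field_simp [hu, hΦdef, hGdef]
    ring
  -- F is antitone
  have hΦpos : ∀ t, 0 < Φ (I t) := by
    intro t
    have h1 := (hmem (I t)).1.1
    have h2 := (hmem (I t)).2.1
    have := hIpos t
    have : 0 < β * I t := mul_pos hβ this
    have hg1 : 0 ≤ γ * pSP (I t) := mul_nonneg hγ.le h1
    have hg2 : 0 ≤ γ * pPS (I t) := mul_nonneg hγ.le h2
    simp only [hΦdef]
    linarith
  have hFdiff : Differentiable ℝ F := fun t => (hFderiv t).differentiableAt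
  have hFanti : Antitone F := by
    apply antitone_of_deriv_nonpos hFdiff
    intro x
    rw [(hFderiv x).deriv]
    have := hΦpos x
    nlinarith [sq_nonneg (u x)]
  -- F is periodic
  have hFper : Function.Periodic F T := by
    intro x
    simp only [hFdef, hu, hSper x, hIper x]
  -- hence F is constant
  have hFconst : ∀ x, F x = F 0 := by
    intro x
    obtain ⟨y, ⟨hy0, hyT⟩, hxy⟩ := hFper.exists_mem_Ico₀ hT x
    have hT0 : F T = F 0 := by simpa using hFper 0
    have h1 : F T ≤ F y := hFanti hyT.le
    have h2 : F y ≤ F 0 := hFanti hy0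
    rw [hxy]
    linarith
  -- so deriv F = 0 everywhere, giving u ≡ 0
  have huzero : ∀ t, u t = 0 := by
    intro t
    have hd0 : deriv F t = 0 := by
      have : F = fun _ => F 0 := funext hFconst
      rw [this]
      exact deriv_const t (F 0)
    have := (hFderiv t).deriv
    rw [hd0] at this
    have hΦ := hΦpos t
    have h2 : u t ^ 2 * Φ (I t) = 0 := by linarith
    rcases mul_eq_zero.mp h2 with h3 | h3
    · exact pow_eq_zero_iff (by norm_num) |>.mp h3
    · exact absurd h3 (ne_of_gt hΦ)
  -- then S is constant (= δ/β) and I is constant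
  have hScst : ∀ t, S t = δ / β := by
    intro t
    have := huzero t
    simp only [hu] at this
    field_simp
    linarith
  have hIderiv0 : ∀ t, HasDerivAt I 0 t := by
    intro t
    have hI := (hode t).2
    have : β * S t * I t - δ * I t = u t * I t := by simp only [hu]; ring
    rw [this, huzero t, zero_mul] at hI
    exact hI
  have hIcst : I t₁ = I t₂ := by
    apply is_const_of_deriv_eq_zero (fun t => (hIderiv0 t).differentiableAt)
    intro t
    exact (hIderiv0 t).deriv
  exact hne (by rw [hScst t₁, hScst t₂, hIcst])
end

section
/- Let β, δ > 0 with δ < β, and let p_SP, p_PS : ℝ → ℝ be differentiable with p_SP′(I) > 0, p_PS′(I) < 0, p_SP(I) ≥ 0, and p_PS(I) ≥ 0 for all I ∈ [0,1]. Suppose I₁ : (0,∞) → ℝ is differentiable with 0 < I₁(γ) ≤ 1 for all γ, and for every γ > 0 it satisfies the equilibrium equation −δ·I₁(γ) − (γδ/β)·p_SP(I₁(γ)) + γ·(1 − δ/β − I₁(γ))·p_PS(I₁(γ)) = 0. Then dI₁/dγ > 0 for all γ > 0: the equilibrium level of infection at the endemic equilibrium of the continuous-response model strictly increases with the update rate γ.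 -/
/-- Let 0 < δ < β and p_SP, p_PS differentiable with p_SP′ > 0,
p_PS′ < 0, p_SP ≥ 0, p_PS ≥ 0 on [0,1]. Suppose I₁ : (0,∞) → ℝ is differentiable
with 0 < I₁(γ) ≤ 1, satisfying for every γ > 0 the equilibrium equation
−δ·I₁(γ) − (γδ/β)·p_SP(I₁(γ)) + γ·(1 − δ/β − I₁(γ))·p_PS(I₁(γ)) = 0. Then
dI₁/dγ > 0 for all γ > 0: the equilibrium infection level of the
continuous-response model strictly increases with the update rate. -/
theorem equilibrium_infection_increases_continuous (β δ : ℝ) (hδ : 0 < δ)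
    (hδβ : δ < β) (pSP pPS : ℝ → ℝ)
    (hSP : ∀ I ∈ Set.Icc (0 : ℝ) 1, DifferentiableAt ℝ pSP I ∧ 0 < deriv pSP I)
    (hPS : ∀ I ∈ Set.Icc (0 : ℝ) 1, DifferentiableAt ℝ pPS I ∧ deriv pPS I < 0)
    (hSPnn : ∀ I ∈ Set.Icc (0 : ℝ) 1, 0 ≤ pSP I)
    (hPSnn : ∀ I ∈ Set.Icc (0 : ℝ) 1, 0 ≤ pPS I)
    (I₁ : ℝ → ℝ)
    (hI₁d : ∀ γ ∈ Set.Ioi (0 : ℝ), DifferentiableAt ℝ I₁ γ)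
    (hI₁mem : ∀ γ ∈ Set.Ioi (0 : ℝ), 0 < I₁ γ ∧ I₁ γ ≤ 1)
    (heq : ∀ γ ∈ Set.Ioi (0 : ℝ),
      -δ * I₁ γ - (γ * δ / β) * pSP (I₁ γ) +
        γ * (1 - δ / β - I₁ γ) * pPS (I₁ γ) = 0) :
    ∀ γ ∈ Set.Ioi (0 : ℝ), 0 < deriv I₁ γ := by
  intro γ hγ
  have hγ0 : (0 : ℝ) < γ := hγ
  have hβ : (0 : ℝ) < β := hδ.trans hδβ
  set I : ℝ := I₁ γ with hIdef
  have hImem : I ∈ Set.Icc (0 : ℝ) 1 :=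
    ⟨(hI₁mem γ hγ).1.le, (hI₁mem γ hγ).2⟩
  have hI0 : 0 < I := (hI₁mem γ hγ).1
  set a : ℝ := deriv I₁ γ with hadef
  set s : ℝ := pSP I with hsdef
  set p : ℝ := pPS I with hpdef
  set s' : ℝ := deriv pSP I with hs'def
  set p' : ℝ := deriv pPS I with hp'def
  have hs'pos : 0 < s' := (hSP I hImem).2
  have hp'neg : p' < 0 := (hPS I hImem).2
  have hsnn : 0 ≤ s := hSPnn I hImem
  have hpnn : 0 ≤ p := hPSnn I hImem
  -- derivatives
  have h1 : HasDerivAt I₁ a γ := (hI₁d γ hγ).hasDerivAt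
  have hSc : HasDerivAt (fun x => pSP (I₁ x)) (s' * a) γ :=
    ((hSP I hImem).1.hasDerivAt).comp γ h1
  have hPc : HasDerivAt (fun x => pPS (I₁ x)) (p' * a) γ :=
    ((hPS I hImem).1.hasDerivAt).comp γ h1
  -- the function G
  set G : ℝ → ℝ := fun x =>
    -δ * I₁ x - x * (δ / β) * pSP (I₁ x) +
      x * ((1 - δ / β - I₁ x) * pPS (I₁ x)) with hGdef
  set D : ℝ := -δ * a -
      ((1 : ℝ) * (δ / β) * s + γ * (δ / β) * (s' * a)) +
      ((1 : ℝ) * ((1 - δ / β - I) * p) + γ * (-a * p + (1 - δ / β - I) * (p' * a)))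
    with hDdef
  have hG : HasDerivAt G D γ := by
    have t1 : HasDerivAt (fun x => -δ * I₁ x) (-δ * a) γ := h1.const_mul (-δ)
    have t2 : HasDerivAt (fun x : ℝ => x * (δ / β)) (1 * (δ / β)) γ :=
      (hasDerivAt_id γ).mul_const (δ / β)
    have t2' : HasDerivAt (fun x => x * (δ / β) * pSP (I₁ x))
        (1 * (δ / β) * pSP (I₁ γ) + γ * (δ / β) * (s' * a)) γ := t2.mul hSc
    have t3a : HasDerivAt (fun x => (1 - δ / β) - I₁ x) (-a) γ :=
      h1.const_sub (1 - δ / β)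
    have t3b : HasDerivAt (fun x => ((1 - δ / β) - I₁ x) * pPS (I₁ x))
        (-a * pPS (I₁ γ) + ((1 - δ / β) - I₁ γ) * (p' * a)) γ := t3a.mul hPc
    have t3 : HasDerivAt (fun x => x * (((1 - δ / β) - I₁ x) * pPS (I₁ x)))
        (1 * (((1 - δ / β) - I₁ γ) * pPS (I₁ γ)) +
          γ * (-a * pPS (I₁ γ) + ((1 - δ / β) - I₁ γ) * (p' * a))) γ :=
      (hasDerivAt_id γ).mul t3b
    have := (t1.sub t2').add t3
    convert this using 1 <;> rfl
  have hG0 : G =ᶠ[nhds γ] fun _ => (0 : ℝ) := by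
    filter_upwards [Ioi_mem_nhds hγ0] with x hx
    have h := heq x hx
    simp only [hGdef]
    linear_combination h
  have hDzero : D = 0 := by
    have h1' : deriv G γ = D := hG.deriv
    have h2' : deriv G γ = deriv (fun _ : ℝ => (0 : ℝ)) γ := hG0.deriv_eq
    simp at h2'
    rw [h1'] at h2'
    exact h2'
  -- equilibrium equation at γ
  have hE : -δ * I - (γ * δ / β) * s + γ * (1 - δ / β - I) * p = 0 := heq γ hγ
  -- positivity facts
  have hKp : 0 < (1 - δ / β - I) * p := by
    have h1' : γ * ((1 - δ / β - I) * p) = δ * I + γ * δ / β * s := by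
      linear_combination hE
    have hrhs : 0 < δ * I + γ * δ / β * s := by
      have : 0 ≤ γ * δ / β * s := by positivity
      nlinarith [mul_pos hδ hI0]
    nlinarith
  have hp : 0 < p := by
    rcases hpnn.lt_or_eq with h | h
    · exact h
    · exfalso; rw [← h] at hKp; simp at hKp
  have hK : 0 < 1 - δ / β - I := by
    by_contra h
    push_neg at h
    nlinarith
  -- key identity
  have key : a * (γ * δ + γ ^ 2 * (δ / β) * s' + γ ^ 2 * p
      - γ ^ 2 * ((1 - δ / β - I) * p')) = δ * I := by
    linear_combination hE - γ * hDzero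
  have hC : 0 < γ * δ + γ ^ 2 * (δ / β) * s' + γ ^ 2 * p
      - γ ^ 2 * ((1 - δ / β - I) * p') := by
    have h1' : 0 < γ * δ := mul_pos hγ0 hδ
    have h2' : 0 < γ ^ 2 * (δ / β) * s' := by positivity
    have h3' : 0 < γ ^ 2 * p := by positivity
    have h4' : γ ^ 2 * ((1 - δ / β - I) * p') < 0 := by
      have : (1 - δ / β - I) * p' < 0 := mul_neg_of_pos_of_neg hK hp'neg
      nlinarith [sq_nonneg γ, mul_pos hγ0 hγ0]
    linarith
  by_contra ha
  push_neg at ha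
  have h5' := mul_nonpos_of_nonpos_of_nonneg ha hC.le
  linarith [mul_pos hδ hI0]
end

section
/- Let β, γ, δ > 0. There is no nonconstant periodic differentiable solution (S, I) : ℝ → ℝ² of the SIRS-type system S′ = −βSI + γ(1−S−I), I′ = βSI − δI with S(t) > 0 and I(t) > 0 for all t. (This rules out closed trajectories lying entirely below the discontinuity line in the strictly rational model.) -/
/-- Let β, γ, δ > 0. There is no nonconstant periodic differentiable
solution (S, I) : ℝ → ℝ² of the SIRS-type system S′ = −βSI + γ(1−S−I),
I′ = βSI − δI with S(t) > 0 and I(t) > 0 for all t. (No closed trajectories lie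
entirely below the discontinuity line in the strictly rational model.) -/
theorem no_periodic_trajectory_below_line (β γ δ : ℝ) (hβ : 0 < β) (hγ : 0 < γ)
    (hδ : 0 < δ) :
    ¬ ∃ (T : ℝ) (S I : ℝ → ℝ),
        0 < T ∧
        Function.Periodic S T ∧ Function.Periodic I T ∧
        (∃ t₁ t₂ : ℝ, (S t₁, I t₁) ≠ (S t₂, I t₂)) ∧
        (∀ t, 0 < S t ∧ 0 < I t) ∧
        (∀ t, HasDerivAt S (-β * S t * I t + γ * (1 - S t - I t)) t ∧
          HasDerivAt I (β * S t * I t - δ * I t) t) := by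
  rintro ⟨T, S, I, hT, hSp, hIp, ⟨t₁, t₂, hne⟩, hpos, hderiv⟩
  -- Lyapunov function
  set a : ℝ := (δ + γ) / β with ha
  set c : ℝ := γ / β with hc
  set b : ℝ := γ * (β - δ) / (β * (δ + γ)) with hb
  set M : ℝ → ℝ := fun t => S t + I t - a * Real.log (S t + c) - b * Real.log (I t)
    with hM
  set m : ℝ → ℝ := fun t =>
    -(γ * (β + γ) * (β * S t - δ) ^ 2 / (β * (β * S t + γ) * (δ + γ))) with hm
  have hdgpos : (0:ℝ) < δ + γ := by linarith
  have hSc : ∀ t, 0 < S t + c := fun t => by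
    have := (hpos t).1; positivity
  have hden : ∀ t, 0 < β * S t + γ := fun t => by
    have := (hpos t).1; positivity
  have hMd : ∀ t, HasDerivAt M (m t) t := by
    intro t
    obtain ⟨hS, hI⟩ := hderiv t
    have h1 : HasDerivAt (fun t => Real.log (S t + c))
        ((-β * S t * I t + γ * (1 - S t - I t)) / (S t + c)) t :=
      (hS.add_const c).log (hSc t).ne'
    have h2 : HasDerivAt (fun t => Real.log (I t))
        ((β * S t * I t - δ * I t) / (I t)) t :=
      hI.log (hpos t).2.ne'
    have hd := ((hS.add hI).sub (h1.const_mul a)).sub (h2.const_mul b)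
    have hIt : I t ≠ 0 := (hpos t).2.ne'
    have hSct : S t + c ≠ 0 := (hSc t).ne'
    have hdent : β * S t + γ ≠ 0 := (hden t).ne'
    have hdent2 : γ * β + β ^ 2 * S t ≠ 0 := by
      have := hden t; nlinarith
    have hdent3 : β * γ + β ^ 2 * S t ≠ 0 := by
      have := hden t; nlinarith
    have heq : -β * S t * I t + γ * (1 - S t - I t) + (β * S t * I t - δ * I t) -
        a * ((-β * S t * I t + γ * (1 - S t - I t)) / (S t + c)) -
        b * ((β * S t * I t - δ * I t) / I t) = m t := by
      have hsplit : S t + c = (β * S t + γ) / β := by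
        rw [hc, add_div' _ _ _ hβ.ne', mul_comm]
      rw [hm, ha, hb, hsplit, div_div_eq_mul_div]
      field_simp
      ring
    rw [← heq]
    exact hd
  have hmle : ∀ t, m t ≤ 0 := fun t => by
    have h1 : (0:ℝ) ≤ γ * (β + γ) * (β * S t - δ) ^ 2 / (β * (β * S t + γ) * (δ + γ)) := by
      have := hden t; positivity
    simpa [hm] using neg_nonpos.mpr h1
  have hMderiv : ∀ t, deriv M t = m t := fun t => (hMd t).deriv
  have hManti : Antitone M :=
    antitone_of_deriv_nonpos (fun t => (hMd t).differentiableAt)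
      (fun t => (hMderiv t).le.trans (hmle t))
  have hMP : Function.Periodic M T := fun t => by
    simp only [hM, hSp t, hIp t]
  -- M is constant
  have hMconst : ∀ s t : ℝ, M s = M t := by
    have key : ∀ s t : ℝ, s ≤ t → M s = M t := by
      intro s t hst
      obtain ⟨n, hn⟩ := exists_nat_gt ((t - s) / T)
      have hns : t ≤ s + n * T := by
        have : (t - s) / T < n := hn
        have := (div_lt_iff₀ hT).mp this
        linarith
      have h1 : M t ≤ M s := hManti hst
      have h2 : M (s + n * T) ≤ M t := hManti hns
      have h3 : M (s + n * T) = M s := by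
        have := (hMP.nat_mul n) s
        simpa [add_comm] using this
      linarith
    intro s t
    rcases le_total s t with h | h
    · exact key s t h
    · exact (key t s h).symm
  -- hence deriv M = 0, so m = 0
  have hmzero : ∀ t, m t = 0 := by
    intro t
    have hMeq : M = fun _ => M 0 := funext fun s => hMconst s 0
    have : HasDerivAt M 0 t := by
      rw [hMeq]; exact hasDerivAt_const t (M 0)
    exact (hMd t).unique this
  -- hence S t = δ / β for all t
  have hSeq : ∀ t, β * S t - δ = 0 := by
    intro t
    have h := hmzero t
    rw [hm, neg_eq_zero] at h
    have hne0 : β * (β * S t + γ) * (δ + γ) ≠ 0 := by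
      have := hden t; positivity
    have hnum : γ * (β + γ) * (β * S t - δ) ^ 2 = 0 :=
      (div_eq_zero_iff.mp h).resolve_right hne0
    have hgb : γ * (β + γ) ≠ 0 := by positivity
    have hsq : (β * S t - δ) ^ 2 = 0 :=
      (mul_eq_zero.mp hnum).resolve_left hgb
    exact pow_eq_zero_iff two_ne_zero |>.mp hsq
  -- S constant
  have hSconst : ∀ t, S t = δ / β := fun t => by
    have := hSeq t; field_simp; linarith
  -- S has zero derivative, so the vector field S-component vanishes: I is determined
  have hIconst : ∀ t, I t = γ * (β - δ) / (β * (δ + γ)) := by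
    intro t
    have hS0 : HasDerivAt S 0 t := by
      have hSf : S = fun _ => δ / β := funext hSconst
      rw [hSf]; exact hasDerivAt_const t _
    have h := (hderiv t).1.unique hS0
    have hst := hSconst t
    rw [hst] at h
    have hβ' : β ≠ 0 := hβ.ne'
    field_simp at h
    rw [eq_div_iff (by positivity)]
    apply mul_left_cancel₀ hβ'
    linear_combination -β * h
  exact hne (by rw [hSconst t₁, hSconst t₂, hIconst t₁, hIconst t₂])
end
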